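/- arXiv:math/0105045 — 2 statements merged into one kernel-verified Lean document; each statement's English description precedes it below -/
import Mathlib

section
/- For every infinite set of real numbers X: (1) X satisfies S₁(T,Γ) if and only if X satisfies Sfin(T,Γ); (2) X satisfies S₁(B_T,B_Γ) if and only if X satisfies Sfin(B_T,B_Γ). -/
open Set

namespace TauCoverPaper

/-- `a ⊆* b`: `a \ b` is finite. -/
def AlmostSubset (a b : Set ℕ) : Prop := (a \ b).Finite

/-- `Y` is linearly quasiordered by `⊆*`. -/
def LinQuasi (Y : Set (Set ℕ)) : Prop :=
  ∀ a ∈ Y, ∀ b ∈ Y, AlmostSubset a b ∨ AlmostSubset b a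

/-- `a` is a pseudo-intersection of the family `Y`. -/
def PseudoIntersection (a : Set ℕ) (Y : Set (Set ℕ)) : Prop :=
  a.Infinite ∧ ∀ b ∈ Y, AlmostSubset a b

/-- `Y` is centered: every nonempty finite subfamily has infinite intersection. -/
def Centered (Y : Set (Set ℕ)) : Prop :=
  ∀ F : Set (Set ℕ), F ⊆ Y → F.Finite → F.Nonempty → (⋂₀ F).Infinite

/-- A tower: a family of infinite subsets of `ℕ`, linearly quasiordered by `⊆*`,
with no pseudo-intersection. -/
def IsTower (Y : Set (Set ℕ)) : Prop :=
  (∀ a ∈ Y, a.Infinite) ∧ LinQuasi Y ∧ ¬ ∃ a, PseudoIntersection a Y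

variable {α : Type}

/-- A cover of the space `α`: the union is everything, and the whole space is
not a member. -/
def IsCover (𝒰 : Set (Set α)) : Prop := ⋃₀ 𝒰 = univ ∧ univ ∉ 𝒰

/-- A large cover: each point belongs to infinitely many members. -/
def IsLargeCover (𝒰 : Set (Set α)) : Prop :=
  IsCover 𝒰 ∧ ∀ x : α, {U ∈ 𝒰 | x ∈ U}.Infinite

/-- An ω-cover: each finite set is contained in some member. -/
def IsOmegaCover (𝒰 : Set (Set α)) : Prop :=
  IsCover 𝒰 ∧ ∀ F : Set α, F.Finite → ∃ U ∈ 𝒰, F ⊆ U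

/-- A γ-cover: infinite, and each point belongs to all but finitely many members. -/
def IsGammaCover (𝒰 : Set (Set α)) : Prop :=
  IsCover 𝒰 ∧ 𝒰.Infinite ∧ ∀ x : α, {U ∈ 𝒰 | x ∉ U}.Finite

/-- A τ-cover: a large cover such that for all `x, y`, one of the sets
`{U : x ∈ U, y ∉ U}`, `{U : y ∈ U, x ∉ U}` is finite. -/
def IsTauCover (𝒰 : Set (Set α)) : Prop :=
  IsLargeCover 𝒰 ∧ ∀ x y : α,
    {U ∈ 𝒰 | x ∈ U ∧ y ∉ U}.Finite ∨ {U ∈ 𝒰 | y ∈ U ∧ x ∉ U}.Finite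

/-- A τ*-cover: a large, countably infinite cover which, enumerated bijectively
as `⟨Uₙ⟩`, admits for each point `y` an infinite `r y ⊆ {n | y ∈ Uₙ}` such that
the family `{r y}` is linearly quasiordered by `⊆*`. -/
def IsTauStarCover (𝒰 : Set (Set α)) : Prop :=
  IsLargeCover 𝒰 ∧
  ∃ U : ℕ → Set α, Function.Injective U ∧ Set.range U = 𝒰 ∧
    ∃ r : α → Set ℕ,
      (∀ y : α, (r y).Infinite ∧ r y ⊆ {n | y ∈ U n}) ∧
      (∀ y z : α, AlmostSubset (r y) (r z) ∨ AlmostSubset (r z) (r y))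

/-- Ω : countable open ω-covers. -/
def OpenOmega (α : Type) [TopologicalSpace α] : Set (Set (Set α)) :=
  {𝒰 | 𝒰.Countable ∧ (∀ U ∈ 𝒰, IsOpen U) ∧ IsOmegaCover 𝒰}

/-- Γ : countable open γ-covers. -/
def OpenGamma (α : Type) [TopologicalSpace α] : Set (Set (Set α)) :=
  {𝒰 | 𝒰.Countable ∧ (∀ U ∈ 𝒰, IsOpen U) ∧ IsGammaCover 𝒰}

/-- T : countable open τ-covers. -/
def OpenTau (α : Type) [TopologicalSpace α] : Set (Set (Set α)) :=
  {𝒰 | 𝒰.Countable ∧ (∀ U ∈ 𝒰, IsOpen U) ∧ IsTauCover 𝒰}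

/-- T* : countable open τ*-covers. -/
def OpenTauStar (α : Type) [TopologicalSpace α] : Set (Set (Set α)) :=
  {𝒰 | 𝒰.Countable ∧ (∀ U ∈ 𝒰, IsOpen U) ∧ IsTauStarCover 𝒰}

/-- B_Ω : countable Borel ω-covers. -/
def BorelOmega (α : Type) [MeasurableSpace α] : Set (Set (Set α)) :=
  {𝒰 | 𝒰.Countable ∧ (∀ U ∈ 𝒰, MeasurableSet U) ∧ IsOmegaCover 𝒰}

/-- B_Γ : countable Borel γ-covers. -/
def BorelGamma (α : Type) [MeasurableSpace α] : Set (Set (Set α)) :=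
  {𝒰 | 𝒰.Countable ∧ (∀ U ∈ 𝒰, MeasurableSet U) ∧ IsGammaCover 𝒰}

/-- B_T : countable Borel τ-covers. -/
def BorelTau (α : Type) [MeasurableSpace α] : Set (Set (Set α)) :=
  {𝒰 | 𝒰.Countable ∧ (∀ U ∈ 𝒰, MeasurableSet U) ∧ IsTauCover 𝒰}

/-- The selection principle S₁(𝔘,𝔙). -/
def S1 (𝔘 𝔙 : Set (Set (Set α))) : Prop :=
  ∀ 𝒰 : ℕ → Set (Set α), (∀ n, 𝒰 n ∈ 𝔘) →
    ∃ V : ℕ → Set α, (∀ n, V n ∈ 𝒰 n) ∧ Set.range V ∈ 𝔙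

/-- The selection principle Sfin(𝔘,𝔙). -/
def Sfin (𝔘 𝔙 : Set (Set (Set α))) : Prop :=
  ∀ 𝒰 : ℕ → Set (Set α), (∀ n, 𝒰 n ∈ 𝔘) →
    ∃ F : ℕ → Set (Set α), (∀ n, (F n).Finite ∧ F n ⊆ 𝒰 n) ∧ (⋃ n, F n) ∈ 𝔙

/-- The selection principle Ufin(𝔘,𝔙). -/
def Ufin (𝔘 𝔙 : Set (Set (Set α))) : Prop :=
  ∀ 𝒰 : ℕ → Set (Set α), (∀ n, 𝒰 n ∈ 𝔘) →
    (∀ n, ¬ ∃ F : Set (Set α), F ⊆ 𝒰 n ∧ F.Finite ∧ ⋃₀ F = univ) →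
    ∃ F : ℕ → Set (Set α), (∀ n, (F n).Finite ∧ F n ⊆ 𝒰 n) ∧
      Set.range (fun n => ⋃₀ (F n)) ∈ 𝔙

/-- binom(𝔘,𝔙): each member of 𝔘 contains a subfamily belonging to 𝔙. -/
def Binom (𝔘 𝔙 : Set (Set (Set α))) : Prop :=
  ∀ 𝒰 ∈ 𝔘, ∃ 𝒱 ⊆ 𝒰, 𝒱 ∈ 𝔙

/-- Borel measurability of a map into `P(ℕ)` (identified with the Cantor
space via characteristic functions): each coordinate is measurable. -/
def BorelMeasSets {β : Type} [MeasurableSpace β] (f : β → Set ℕ) : Prop :=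
  ∀ n : ℕ, MeasurableSet {x | n ∈ f x}

/-- The excluded middle property for a family `Y ⊆ ℕ^ℕ`. -/
def ExcludedMiddleProp (Y : Set (ℕ → ℕ)) : Prop :=
  ∃ g : ℕ → ℕ,
    (∀ f ∈ Y, {n | f n < g n}.Infinite) ∧
    ∀ f ∈ Y, ∀ h ∈ Y,
      {n | f n < g n ∧ g n ≤ h n}.Finite ∨ {n | h n < g n ∧ g n ≤ f n}.Finite

/-- non(J): the minimal cardinality of a set of reals not satisfying `J`. -/
noncomputable def nonCard (J : Set ℝ → Prop) : Cardinal :=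
  sInf {c : Cardinal | ∃ X : Set ℝ, ¬ J X ∧ Cardinal.mk ↥X = c}

/-- add(J): the minimal cardinality of a family of sets of reals, each
satisfying `J`, whose union does not satisfy `J`. -/
noncomputable def addCard (J : Set ℝ → Prop) : Cardinal :=
  sInf {c : Cardinal | ∃ 𝔉 : Set (Set ℝ),
    (∀ A ∈ 𝔉, J A) ∧ ¬ J (⋃₀ 𝔉) ∧ Cardinal.mk ↥𝔉 = c}

/-- 𝔱 : the minimal cardinality of a tower. -/
noncomputable def towerCard : Cardinal :=
  sInf {c : Cardinal | ∃ Y : Set (Set ℕ), IsTower Y ∧ Cardinal.mk ↥Y = c}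

section Aux

variable {β : Type} (P : Set β → Prop)

/-- Countable `P`-γ-covers. -/
def GCov : Set (Set (Set β)) :=
  {𝒰 | 𝒰.Countable ∧ (∀ U ∈ 𝒰, P U) ∧ IsGammaCover 𝒰}

/-- Countable `P`-τ-covers. -/
def TCov : Set (Set (Set β)) :=
  {𝒰 | 𝒰.Countable ∧ (∀ U ∈ 𝒰, P U) ∧ IsTauCover 𝒰}

lemma exists_enum {γ : Type} {s : Set γ} (hc : s.Countable) (hi : s.Infinite) :
    ∃ f : ℕ → γ, Function.Injective f ∧ Set.range f = s := by
  haveI := hc.to_subtype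
  haveI := hi.to_subtype
  obtain ⟨d⟩ : Nonempty (Denumerable ↥s) := nonempty_denumerable ↥s
  refine ⟨fun n => ((Denumerable.eqv ↥s).symm n : γ), ?_, ?_⟩
  · exact Subtype.val_injective.comp (Denumerable.eqv ↥s).symm.injective
  · have h : (fun n => ((Denumerable.eqv ↥s).symm n : γ))
        = Subtype.val ∘ (Denumerable.eqv ↥s).symm := rfl
    rw [h, Set.range_comp, Equiv.range_eq_univ, Set.image_univ, Subtype.range_coe]

lemma range_infinite_of {γ : Type} {f : ℕ → Set γ} (hne : ∀ n, f n ≠ univ)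
    (hb : ∀ x, {n | x ∉ f n}.Finite) : (Set.range f).Infinite := by
  intro hfin
  obtain ⟨V, hVr, hVinf⟩ : ∃ V ∈ Set.range f, {n | f n = V}.Infinite := by
    by_contra hco
    push_neg at hco
    have hsub : (Set.univ : Set ℕ) ⊆ ⋃ V ∈ Set.range f, {n | f n = V} :=
      fun n _ => Set.mem_biUnion (Set.mem_range_self n) rfl
    exact Set.infinite_univ ((hfin.biUnion hco).subset hsub)
  have hV : V = univ := by
    apply Set.eq_univ_of_forall
    intro x
    obtain ⟨n, hn1, hn2⟩ := (hVinf.diff (hb x)).nonempty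
    have hx : x ∈ f n := by simpa using hn2
    rwa [hn1] at hx
  obtain ⟨n, rfl⟩ := hVr
  exact hne n hV

lemma gcov_subset_tcov : GCov P ⊆ TCov P := by
  rintro 𝒰 ⟨hc, hp, hcov, hinf, hγ⟩
  refine ⟨hc, hp, ⟨hcov, fun x => ?_⟩, fun x y => ?_⟩
  · have h1 : 𝒰 \ {U ∈ 𝒰 | x ∉ U} ⊆ {U ∈ 𝒰 | x ∈ U} := by
      rintro U ⟨hU, hU2⟩
      exact ⟨hU, by by_contra h; exact hU2 ⟨hU, h⟩⟩
    exact (hinf.diff (hγ x)).mono h1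
  · left
    exact (hγ y).subset (fun U hU => ⟨hU.1, hU.2.2⟩)

lemma tcov_binom (h : Sfin (TCov P) (GCov P)) :
    ∀ 𝒰 ∈ TCov P, ∃ 𝒱, 𝒱 ⊆ 𝒰 ∧ 𝒱 ∈ GCov P := by
  intro 𝒰 h𝒰
  obtain ⟨F, hF, hFG⟩ := h (fun _ => 𝒰) (fun _ => h𝒰)
  exact ⟨⋃ n, F n, Set.iUnion_subset (fun n => (hF n).2), hFG⟩

lemma sfin_gamma_s1 (hP : ∀ s t, P s → P t → P (s ∩ t))
    (h : Sfin (GCov P) (GCov P)) : S1 (GCov P) (GCov P) := by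
  classical
  intro 𝒰 h𝒰
  have hnu : ∀ n, univ ∉ 𝒰 n := fun n => (h𝒰 n).2.2.1.2
  have hγ𝒰 : ∀ n x, {U ∈ 𝒰 n | x ∉ U}.Finite := fun n x => (h𝒰 n).2.2.2.2 x
  have hP𝒰 : ∀ n, ∀ U ∈ 𝒰 n, P U := fun n => (h𝒰 n).2.1
  have henum : ∀ n, ∃ f : ℕ → Set β, Function.Injective f ∧ Set.range f = 𝒰 n :=
    fun n => exists_enum (h𝒰 n).1 (h𝒰 n).2.2.2.1
  choose E hEinj hErange using henum
  have hEmem : ∀ n k, E n k ∈ 𝒰 n := by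
    intro n k; rw [← hErange n]; exact Set.mem_range_self k
  have hEbad : ∀ i x, {k | x ∉ E i k}.Finite := by
    intro i x
    have heq : {k | x ∉ E i k} = (E i) ⁻¹' {U | U ∈ 𝒰 i ∧ x ∉ U} := by
      ext k
      simp only [Set.mem_setOf_eq, Set.mem_preimage]
      exact ⟨fun hh => ⟨hEmem i k, hh⟩, fun hh => hh.2⟩
    rw [heq]
    exact Set.Finite.preimage (hEinj i).injOn (hγ𝒰 i x)
  -- diagonal intersections
  let W : ℕ → ℕ → Set β := fun n k =>
    Nat.rec (E 0 k) (fun n' prev => prev ∩ E (n' + 1) k) n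
  have hW0 : ∀ k, W 0 k = E 0 k := fun _ => rfl
  have hWsucc : ∀ n k, W (n + 1) k = W n k ∩ E (n + 1) k := fun _ _ => rfl
  have hWP : ∀ n k, P (W n k) := by
    intro n k
    induction n with
    | zero => exact hP𝒰 0 _ (hEmem 0 k)
    | succ n ih => exact hP _ _ ih (hP𝒰 (n + 1) _ (hEmem (n + 1) k))
  have hWsub : ∀ n i k, i ≤ n → W n k ⊆ E i k := by
    intro n
    induction n with
    | zero =>
      intro i k hi
      obtain rfl : i = 0 := Nat.le_zero.mp hi
      rw [hW0]
    | succ n ih =>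
      intro i k hi
      rcases Nat.eq_or_lt_of_le hi with rfl | hlt
      · rw [hWsucc]; exact Set.inter_subset_right
      · rw [hWsucc]
        exact Set.inter_subset_left.trans (ih i k (Nat.lt_succ_iff.mp hlt))
  have hWmem : ∀ n k x, (∀ i, i ≤ n → x ∈ E i k) → x ∈ W n k := by
    intro n
    induction n with
    | zero => intro k x hx; rw [hW0]; exact hx 0 le_rfl
    | succ n ih =>
      intro k x hx
      rw [hWsucc]
      exact ⟨ih k x (fun i hi => hx i (hi.trans (Nat.le_succ n))), hx (n + 1) le_rfl⟩
  have hWne : ∀ n k, W n k ≠ univ := by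
    intro n k hW
    have h1 : univ ⊆ E 0 k := hW ▸ hWsub n 0 k (Nat.zero_le n)
    have h2 : E 0 k = univ := Set.univ_subset_iff.mp h1
    exact hnu 0 (h2 ▸ hEmem 0 k)
  have hWbad : ∀ n x, {k | x ∉ W n k}.Finite := by
    intro n x
    have hsub : {k | x ∉ W n k} ⊆ ⋃ i ∈ Finset.range (n + 1), {k | x ∉ E i k} := by
      intro k hk
      by_contra hco
      simp only [Set.mem_iUnion, Finset.mem_range, Set.mem_setOf_eq, not_exists, not_not] at hco
      exact hk (hWmem n k x (fun i hi => hco i (Nat.lt_succ_of_le hi)))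
    exact (Set.Finite.biUnion (Finset.range (n + 1)).finite_toSet
      (fun i _ => hEbad i x)).subset hsub
  let 𝒱 : ℕ → Set (Set β) := fun n => Set.range (fun k => W n k)
  have h𝒱 : ∀ n, 𝒱 n ∈ GCov P := by
    intro n
    refine ⟨Set.countable_range _, ?_, ⟨?_, ?_⟩, ?_, ?_⟩
    · rintro U ⟨k, rfl⟩; exact hWP n k
    · apply Set.eq_univ_of_forall
      intro x
      obtain ⟨k, hk⟩ := (hWbad n x).infinite_compl.nonempty
      have hxk : x ∈ W n k := not_not.mp hk
      exact Set.mem_sUnion.mpr ⟨W n k, ⟨k, rfl⟩, hxk⟩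
    · rintro ⟨k, hk⟩; exact hWne n k hk
    · exact range_infinite_of (hWne n) (hWbad n)
    · intro x
      refine ((hWbad n x).image (fun k => W n k)).subset ?_
      rintro U ⟨⟨k, rfl⟩, hU2⟩
      exact ⟨k, hU2, rfl⟩
  obtain ⟨F, hF, hFG⟩ := h 𝒱 h𝒱
  obtain ⟨hFc, hFp, ⟨hFcov, hFnu⟩, hFinf, hFbad⟩ := hFG
  have key : ∀ M : ℕ, ∃ p : ℕ × Set β, M < p.1 ∧ p.2 ∈ F p.1 ∧ ∀ i < p.1, p.2 ∉ F i := by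
    intro M
    have hBfin : (⋃ i ∈ Finset.range (M + 1), F i).Finite :=
      Set.Finite.biUnion (Finset.range (M + 1)).finite_toSet (fun i _ => (hF i).1)
    obtain ⟨V, hV1, hV2⟩ := (hFinf.diff hBfin).nonempty
    have hex : ∃ n, V ∈ F n := Set.mem_iUnion.mp hV1
    refine ⟨(Nat.find hex, V), ?_, Nat.find_spec hex, fun i hi => Nat.find_min hex hi⟩
    by_contra hle
    push_neg at hle
    exact hV2 (Set.mem_iUnion₂.mpr
      ⟨Nat.find hex, Finset.mem_range.mpr (Nat.lt_succ_of_le hle), Nat.find_spec hex⟩)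
  let g : ℕ → ℕ × Set β := fun j =>
    Nat.rec (Classical.choose (key 0)) (fun _ prev => Classical.choose (key prev.1)) j
  have hg : ∀ j, (g j).2 ∈ F (g j).1 ∧ ∀ i < (g j).1, (g j).2 ∉ F i := by
    intro j
    cases j with
    | zero => exact ⟨(Classical.choose_spec (key 0)).2.1, (Classical.choose_spec (key 0)).2.2⟩
    | succ j =>
      exact ⟨(Classical.choose_spec (key (g j).1)).2.1,
        (Classical.choose_spec (key (g j).1)).2.2⟩
  have hgmono : ∀ j, (g j).1 < (g (j + 1)).1 :=
    fun j => (Classical.choose_spec (key (g j).1)).1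
  set m : ℕ → ℕ := fun j => (g j).1 with hm
  set S : ℕ → Set β := fun j => (g j).2 with hS
  have hmS : StrictMono m := strictMono_nat_of_lt_succ hgmono
  have hmge : ∀ n, n ≤ m n := fun n => hmS.le_apply
  have hSmem : ∀ j, S j ∈ F (m j) := fun j => (hg j).1
  have hSnot : ∀ j i, i < m j → S j ∉ F i := fun j => (hg j).2
  have hSinj : Function.Injective S := by
    intro a b hab
    by_contra hne
    rcases Nat.lt_or_ge a b with hlt | hge
    · exact hSnot b (m a) (hmS hlt) (hab ▸ hSmem a)
    · have hlt : b < a := Nat.lt_of_le_of_ne hge (fun hh => hne hh.symm)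
      exact hSnot a (m b) (hmS hlt) (hab.symm ▸ hSmem b)
  have hk : ∀ j, ∃ kk, W (m j) kk = S j := fun j => (hF (m j)).2 (hSmem j)
  choose k hkW using hk
  let Vf : ℕ → Set β := fun n => E n (k n)
  have hVmem : ∀ n, Vf n ∈ 𝒰 n := fun n => hEmem n (k n)
  have hVbadn : ∀ x, {n | x ∉ Vf n}.Finite := by
    intro x
    have hpre : (S ⁻¹' {U | U ∈ (⋃ n, F n) ∧ x ∉ U}).Finite :=
      Set.Finite.preimage hSinj.injOn (hFbad x)
    refine hpre.subset ?_
    intro n hn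
    have h1 : x ∉ W (m n) (k n) := fun hx => hn (hWsub (m n) n (k n) (hmge n) hx)
    rw [hkW n] at h1
    exact ⟨Set.mem_iUnion.mpr ⟨m n, hSmem n⟩, h1⟩
  have hVne : ∀ n, Vf n ≠ univ := fun n hn => hnu n (hn ▸ hVmem n)
  refine ⟨Vf, hVmem, Set.countable_range _, ?_, ⟨?_, ?_⟩, ?_, ?_⟩
  · rintro U ⟨n, rfl⟩; exact hP𝒰 n _ (hVmem n)
  · apply Set.eq_univ_of_forall
    intro x
    obtain ⟨n, hn⟩ := (hVbadn x).infinite_compl.nonempty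
    exact Set.mem_sUnion.mpr ⟨Vf n, ⟨n, rfl⟩, not_not.mp hn⟩
  · rintro ⟨n, hn⟩; exact hVne n hn
  · exact range_infinite_of hVne hVbadn
  · intro x
    refine ((hVbadn x).image Vf).subset ?_
    rintro U ⟨⟨n, rfl⟩, hU2⟩
    exact ⟨n, hU2, rfl⟩

lemma s1_iff_sfin (hP : ∀ s t, P s → P t → P (s ∩ t)) :
    S1 (TCov P) (GCov P) ↔ Sfin (TCov P) (GCov P) := by
  constructor
  · intro h 𝒰 h𝒰
    obtain ⟨V, hV1, hV2⟩ := h 𝒰 h𝒰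
    refine ⟨fun n => {V n},
      fun n => ⟨Set.finite_singleton _, Set.singleton_subset_iff.mpr (hV1 n)⟩, ?_⟩
    have he : (⋃ n, {V n}) = Set.range V := by
      ext U; simp [eq_comm]
    rwa [he]
  · intro h 𝒰 h𝒰
    have hg : Sfin (GCov P) (GCov P) :=
      fun 𝒲 h𝒲 => h 𝒲 (fun n => gcov_subset_tcov P (h𝒲 n))
    have hbin := fun n => tcov_binom P h (𝒰 n) (h𝒰 n)
    choose 𝒲 h𝒲1 h𝒲2 using hbin
    obtain ⟨V, hV1, hV2⟩ := sfin_gamma_s1 P hP hg 𝒲 h𝒲2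
    exact ⟨V, fun n => h𝒲1 n (hV1 n), hV2⟩

end Aux

/-- `S₁(T,Γ) = Sfin(T,Γ)`, and the Borel analogue. -/
theorem statement3 (X : Set ℝ) (hX : X.Infinite) :
    (S1 (OpenTau ↥X) (OpenGamma ↥X) ↔ Sfin (OpenTau ↥X) (OpenGamma ↥X)) ∧
    (S1 (BorelTau ↥X) (BorelGamma ↥X) ↔ Sfin (BorelTau ↥X) (BorelGamma ↥X)) := by
  exact ⟨s1_iff_sfin (fun s : Set ↥X => IsOpen s) (fun s t hs ht => hs.inter ht),
    s1_iff_sfin (fun s : Set ↥X => MeasurableSet s) (fun s t hs ht => hs.inter ht)⟩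

end TauCoverPaper
end

section
/- For every infinite set of real numbers X, the following are equivalent: (1) X satisfies S₁(B_T,B_Γ); (2) no Borel image of X in [ℕ]^∞ is a tower, and every Borel image of X in ℕ^ℕ is bounded with respect to eventual dominance ≤*. -/
/-!
(1) ⇒ (2). If `f` is a Borel map into `[ℕ]^∞` with `⊆*`-linear range, the sets
`Uₙ = {x | n ∈ f x}` satisfy the τ-condition index by index; applying S₁ to a constant sequence
yields a γ-subcover, and its indices form a pseudo-intersection of the range. The cover may fail to
be large because the `Uₙ` can repeat; adding each `Uₙ` with an `n`-th point toggled repairs this.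
For a Borel `g : X → ℕ^ℕ`, the sets `{x | maxₖ≤ₙ g x k ≤ m}` (`m ∈ ℕ`) form a γ-cover for each `n`,
and the levels `mₙ` selected by S₁ bound `g` eventually.

(2) ⇒ (1). Enumerate the `n`-th τ-cover injectively as `(Uₙ,ₘ)ₘ`. The index sets
`{m | x ∈ Uₙ,ₘ}` are a `⊆*`-linear Borel image, so they have a pseudo-intersection `aₙ`. The least
`K` such that `x ∈ Uₙ,ₘ` for all `m ∈ aₙ` beyond `K` is Borel in `(x, n)`, hence bounded by some
`b`; choosing `mₙ ∈ aₙ` above `b n` gives a γ-cover `(Uₙ,ₘₙ)ₙ`.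
-/

open Set

namespace TauCoverPaper

variable {α : Type}

section Covers

theorem IsGammaCover.isTauCover {𝒰 : Set (Set α)} (h : IsGammaCover 𝒰) : IsTauCover 𝒰 := by
  obtain ⟨hcov, hinf, hfin⟩ := h
  refine ⟨⟨hcov, fun x => ?_⟩, fun x y => Or.inl ((hfin y).subset fun U hU => ⟨hU.1, hU.2.2⟩)⟩
  exact (hinf.sdiff (hfin x)).mono fun U hU => ⟨hU.1, by_contra fun hx => hU.2 ⟨hU.1, hx⟩⟩

theorem isGammaCover_range {W : ℕ → Set α} (hne : ∀ m, W m ≠ univ)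
    (hev : ∀ x, {m | x ∉ W m}.Finite) : IsGammaCover (range W) := by
  refine ⟨⟨eq_univ_of_forall fun x => ?_, fun ⟨m, hm⟩ => hne m hm⟩, fun hfin => ?_, fun x => ?_⟩
  · obtain ⟨m, hm⟩ := (hev x).infinite_compl.nonempty
    exact ⟨W m, mem_range_self m, not_not.1 hm⟩
  · -- a point outside each of the finitely many members misses every `W m`
    have := hfin.to_subtype
    have hout : ∀ A : range W, ∃ z, z ∉ (A : Set α) := by
      rintro ⟨_, m, rfl⟩
      exact (ne_univ_iff_exists_notMem _).1 (hne m)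
    choose z hz using hout
    exact infinite_univ ((finite_iUnion fun A => hev (z A)).subset fun m _ =>
      mem_iUnion.2 ⟨⟨W m, mem_range_self m⟩, hz ⟨W m, mem_range_self m⟩⟩)
  · refine ((hev x).image W).subset ?_
    rintro _ ⟨⟨m, rfl⟩, hx⟩
    exact ⟨m, hx, rfl⟩

theorem IsGammaCover.exists_injOn_eventually_mem {V : ℕ → Set α} (h : IsGammaCover (range V)) :
    ∃ N : Set ℕ, InjOn V N ∧ N.Infinite ∧ ∀ x, {k ∈ N | x ∉ V k}.Finite := by
  obtain ⟨N, hNrange, hNinj⟩ := exists_image_eq_and_injOn univ V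
  refine ⟨N, hNinj, fun hfin => h.2.1 ?_, fun x => ?_⟩
  · rw [← image_univ, ← hNrange]
    exact hfin.image V
  · refine Finite.of_finite_image ((h.2.2 x).subset ?_) (hNinj.mono fun k hk => hk.1)
    rintro _ ⟨k, ⟨-, hk⟩, rfl⟩
    exact ⟨mem_range_self k, hk⟩

theorem IsGammaCover.exists_reindex {V : ℕ → Set α} (h : IsGammaCover (range V)) :
    ∃ ψ : ℕ → ℕ, (∀ k, k ≤ ψ k) ∧ ∀ x, {k | x ∉ V (ψ k)}.Finite := by
  obtain ⟨N, -, hN, hNx⟩ := h.exists_injOn_eventually_mem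
  choose ψ hψN hψ using fun k => hN.exists_gt k
  refine ⟨ψ, fun k => (hψ k).le, fun x => ?_⟩
  obtain ⟨c, hc⟩ := (hNx x).bddAbove
  exact (finite_Iic c).subset fun k hk => (hψ k).le.trans (hc ⟨hψN k, hk⟩)

theorem exists_injective_range_eq {β : Type*} {s : Set β} (hc : s.Countable) (hi : s.Infinite) :
    ∃ U : ℕ → β, Function.Injective U ∧ range U = s := by
  have := hc.to_subtype
  have := hi.to_subtype
  obtain ⟨e⟩ := nonempty_equiv_of_countable (α := ℕ) (β := s)
  exact ⟨Subtype.val ∘ e, Subtype.val_injective.comp e.injective, by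
    rw [range_comp, e.range_eq_univ, image_univ, Subtype.range_coe]⟩

theorem IsLargeCover.infinite_setOf_mem {U : ℕ → Set α} (h : IsLargeCover (range U)) (x : α) :
    {m | x ∈ U m}.Infinite := fun hfin =>
  h.2 x <| (hfin.image U).subset <| by
    rintro _ ⟨⟨m, rfl⟩, hx⟩
    exact ⟨m, hx, rfl⟩

theorem IsTauCover.linQuasi_range {U : ℕ → Set α} (hU : Function.Injective U)
    (h : IsTauCover (range U)) : LinQuasi (range fun x => {m | x ∈ U m}) := by
  have key : ∀ x y, {A ∈ range U | x ∈ A ∧ y ∉ A}.Finite →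
      AlmostSubset {m | x ∈ U m} {m | y ∈ U m} := fun x y hfin =>
    Finite.of_finite_image (hfin.subset <| by rintro _ ⟨m, hm, rfl⟩; exact ⟨mem_range_self m, hm⟩)
      hU.injOn
  rintro _ ⟨x, rfl⟩ _ ⟨y, rfl⟩
  exact (h.2 x y).imp (key x y) (key y x)

end Covers

/-- For injective `e` the two members with index `n` determine `n`, so a point lying in `U n` for
infinitely many `n` lies in infinitely many distinct members, however often the `U n` repeat. -/
def toggleFamily (U : ℕ → Set α) (e : ℕ → α) : ℕ × Bool → Set α :=
  fun p => if p.2 then symmDiff (U p.1) {e p.1} else U p.1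

section Toggle

variable {U : ℕ → Set α} {e : ℕ → α}

theorem mem_toggleFamily_iff {x : α} {p : ℕ × Bool} (hx : x ≠ e p.1) :
    x ∈ toggleFamily U e p ↔ x ∈ U p.1 := by
  obtain ⟨n, _ | _⟩ := p <;> simp [toggleFamily, mem_symmDiff, hx]

theorem toggleFamily_infinite_setOf_mem (he : Function.Injective e) {x : α}
    (hx : {n | x ∈ U n}.Infinite) : {A ∈ range (toggleFamily U e) | x ∈ A}.Infinite := by
  set S := {A ∈ range (toggleFamily U e) | x ∈ A}
  let pair : ℕ → Set α × Set α := fun n => (toggleFamily U e (n, false), toggleFamily U e (n, true))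
  have hpair : Function.Injective pair := fun n m h => he <| by
    obtain ⟨h₁, h₂⟩ := Prod.mk.inj h
    simp only [toggleFamily, Bool.false_eq_true, ↓reduceIte] at h₁ h₂
    rwa [h₁, symmDiff_right_inj, singleton_eq_singleton_iff] at h₂
  have hgood : {n | x ∈ U n ∧ x ≠ e n}.Infinite :=
    (hx.sdiff ((finite_singleton x).preimage he.injOn)).mono fun n hn => ⟨hn.1, Ne.symm hn.2⟩
  refine fun hS => (hgood.image hpair.injOn) ((hS.prod hS).subset ?_)
  rintro _ ⟨n, ⟨hxn, hen⟩, rfl⟩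
  exact ⟨⟨⟨(n, false), rfl⟩, (mem_toggleFamily_iff (p := (n, false)) hen).2 hxn⟩,
    ⟨⟨(n, true), rfl⟩, (mem_toggleFamily_iff (p := (n, true)) hen).2 hxn⟩⟩

theorem finite_setOf_mem_toggleFamily_notMem (he : Function.Injective e) {x y : α}
    (h : {n | x ∈ U n ∧ y ∉ U n}.Finite) :
    {p | x ∈ toggleFamily U e p ∧ y ∉ toggleFamily U e p}.Finite := by
  refine ((h.union ((toFinite {x, y}).preimage he.injOn)).prod finite_univ).subset ?_
  rintro p ⟨hx, hy⟩
  by_cases hp : e p.1 = x ∨ e p.1 = y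
  · exact ⟨Or.inr hp, trivial⟩
  · rw [not_or] at hp
    exact ⟨Or.inl ⟨(mem_toggleFamily_iff (Ne.symm hp.1)).1 hx,
      fun h => hy ((mem_toggleFamily_iff (Ne.symm hp.2)).2 h)⟩, trivial⟩

theorem measurableSet_toggleFamily [MeasurableSpace α] [MeasurableSingletonClass α]
    (hU : ∀ n, MeasurableSet (U n)) (p : ℕ × Bool) : MeasurableSet (toggleFamily U e p) := by
  obtain ⟨n, _ | _⟩ := p
  exacts [hU n, (hU n).symmDiff (measurableSet_singleton _)]

end Toggle

section Borel

variable [MeasurableSpace α]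

theorem exists_infinite_eventually_mem_of_S1 {ι : Type*} [Countable ι]
    (hS1 : S1 (BorelTau α) (BorelGamma α)) {D : ι → Set α} (hD : ∀ i, MeasurableSet (D i))
    (hlarge : ∀ x, {A ∈ range D | x ∈ A}.Infinite)
    (hlin : ∀ x y, {i | x ∈ D i ∧ y ∉ D i}.Finite ∨ {i | y ∈ D i ∧ x ∉ D i}.Finite) :
    ∃ a : Set ι, a.Infinite ∧ ∀ x, {i ∈ a | x ∉ D i}.Finite := by
  set W := range D \ {univ}
  have hlargeW : ∀ x, {A ∈ W | x ∈ A}.Infinite := fun x =>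
    ((hlarge x).sdiff (finite_singleton univ)).mono fun A hA => ⟨⟨hA.1.1, hA.2⟩, hA.1.2⟩
  have hlinW : ∀ x y, {i | x ∈ D i ∧ y ∉ D i}.Finite → {A ∈ W | x ∈ A ∧ y ∉ A}.Finite :=
    fun x y hfin => (hfin.image D).subset <| by
      rintro _ ⟨⟨⟨i, rfl⟩, -⟩, hi⟩
      exact ⟨i, hi, rfl⟩
  have hW : W ∈ BorelTau α := by
    refine ⟨(countable_range D).mono sdiff_subset, by rintro _ ⟨⟨i, rfl⟩, -⟩; exact hD i, ?_⟩
    refine ⟨⟨⟨eq_univ_of_forall fun x => ?_, fun h => h.2 rfl⟩, hlargeW⟩,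
      fun x y => (hlin x y).imp (hlinW x y) (hlinW y x)⟩
    obtain ⟨A, hAW, hxA⟩ := (hlargeW x).nonempty
    exact ⟨A, hAW, hxA⟩
  obtain ⟨V, hVW, -, -, hγ⟩ := hS1 (fun _ => W) fun _ => hW
  choose idx hidx using fun k => (hVW k).1
  obtain ⟨N, hVinj, hN, hNx⟩ := hγ.exists_injOn_eventually_mem
  have hV : D ∘ idx = V := funext hidx
  refine ⟨idx '' N, hN.image fun k hk l hl h => hVinj hk hl ?_, fun x => ?_⟩
  · rw [← hV, Function.comp_apply, Function.comp_apply, h]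
  · refine ((hNx x).image idx).subset ?_
    rintro _ ⟨⟨k, hk, rfl⟩, hx⟩
    exact ⟨k, ⟨hk, by rwa [← hidx]⟩, rfl⟩

variable [MeasurableSingletonClass α] [Infinite α]

theorem exists_pseudoIntersection_of_S1 (hS1 : S1 (BorelTau α) (BorelGamma α)) {f : α → Set ℕ}
    (hf : BorelMeasSets f) (hinf : ∀ x, (f x).Infinite) (hlin : LinQuasi (range f)) :
    ∃ a, PseudoIntersection a (range f) := by
  let e := Infinite.natEmbedding α
  let U : ℕ → Set α := fun n => {x | n ∈ f x}
  obtain ⟨a, ha, hax⟩ := exists_infinite_eventually_mem_of_S1 hS1 (D := toggleFamily U e)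
    (measurableSet_toggleFamily hf) (fun x => toggleFamily_infinite_setOf_mem e.injective (hinf x))
    fun x y => (hlin _ ⟨x, rfl⟩ _ ⟨y, rfl⟩).imp
      (finite_setOf_mem_toggleFamily_notMem e.injective)
      (finite_setOf_mem_toggleFamily_notMem e.injective)
  refine ⟨Prod.fst '' a, fun hfin => ha ((hfin.prod finite_univ).subset fun p hp =>
    ⟨mem_image_of_mem _ hp, trivial⟩), ?_⟩
  rintro _ ⟨x, rfl⟩
  refine (((hax x).image Prod.fst).union
    ((finite_singleton x).preimage e.injective.injOn)).subset ?_
  rintro _ ⟨⟨p, hp, rfl⟩, hpx⟩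
  by_cases hex : x = e p.1
  · exact Or.inr hex.symm
  · exact Or.inl ⟨p, ⟨hp, fun h => hpx ((mem_toggleFamily_iff hex).1 h)⟩, rfl⟩

theorem exists_bound_of_S1 (hS1 : S1 (BorelTau α) (BorelGamma α)) {g : α → ℕ → ℕ}
    (hg : Measurable g) : ∃ b : ℕ → ℕ, ∀ x, {n | ¬ g x n ≤ b n}.Finite := by
  let e := Infinite.natEmbedding α
  let M : ℕ → α → ℕ := fun n x => (Finset.range (n + 1)).sup' Finset.nonempty_range_add_one (g x)
  -- the point `e m` is removed so that no member is the whole space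
  let U : ℕ → ℕ → Set α := fun n m => {x | M n x ≤ m} \ {e m}
  have hγ : ∀ n, IsGammaCover (range (U n)) := fun n =>
    isGammaCover_range (fun m h => (h ▸ mem_univ (e m) : e m ∈ U n m).2 rfl) fun x =>
      ((finite_Iio (M n x)).union ((finite_singleton x).preimage e.injective.injOn)).subset
        fun m hm => by
          by_cases hxm : x = e m
          · exact Or.inr hxm.symm
          · exact Or.inl (show m < M n x from lt_of_not_ge fun hle => hm ⟨hle, hxm⟩)
  have hUmeas : ∀ n m, MeasurableSet (U n m) := fun n m =>
    (measurableSet_le (Finset.measurable_range_sup'' fun k _ => hg.eval) measurable_const).diff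
      (measurableSet_singleton _)
  obtain ⟨V, hV, hVγ⟩ := hS1 (fun n => range (U n)) fun n =>
    ⟨countable_range _, by rintro _ ⟨m, rfl⟩; exact hUmeas n m, (hγ n).isTauCover⟩
  choose m hm using hV
  obtain ⟨ψ, hψ, hψV⟩ := hVγ.2.2.exists_reindex
  refine ⟨fun k => m (ψ k), fun x => (hψV x).subset fun k hk hxV => hk ?_⟩
  rw [← hm] at hxV
  exact (Finset.le_sup' (g x) (Finset.mem_range.2 (Nat.lt_succ_of_le (hψ k)))).trans hxV.1

end Borel

section Converse

variable [MeasurableSpace α] [Nonempty α]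

theorem S1_of_noTower_of_bounded
    (hA : ∀ f : α → Set ℕ, BorelMeasSets f → (∀ x, (f x).Infinite) → ¬ IsTower (range f))
    (hB : ∀ g : α → ℕ → ℕ, Measurable g → ∃ b : ℕ → ℕ, ∀ x, {n | ¬ g x n ≤ b n}.Finite) :
    S1 (BorelTau α) (BorelGamma α) := by
  classical
  intro 𝒰 h𝒰
  have henum : ∀ n, ∃ U : ℕ → Set α, Function.Injective U ∧ range U = 𝒰 n := fun n =>
    exists_injective_range_eq (h𝒰 n).1
      (((h𝒰 n).2.2.1.2 (Classical.arbitrary α)).mono fun _ hU => hU.1)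
  choose U hUinj hUrange using henum
  have hUmem : ∀ n m, U n m ∈ 𝒰 n := fun n m => hUrange n ▸ mem_range_self m
  have hUmeas : ∀ n m, MeasurableSet (U n m) := fun n m => (h𝒰 n).2.1 _ (hUmem n m)
  have htau : ∀ n, IsTauCover (range (U n)) := fun n => (hUrange n).symm ▸ (h𝒰 n).2.2
  have hpi : ∀ n, ∃ a, PseudoIntersection a (range fun x => {m | x ∈ U n m}) := fun n => by
    by_contra hno
    refine hA _ (hUmeas n) (htau n).1.infinite_setOf_mem
      ⟨?_, (htau n).linQuasi_range (hUinj n), hno⟩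
    rintro _ ⟨x, rfl⟩
    exact (htau n).1.infinite_setOf_mem x
  choose a ha using hpi
  have hev : ∀ n x, ∃ K, ∀ m ∈ a n, K ≤ m → x ∈ U n m := fun n x => by
    obtain ⟨c, hc⟩ := ((ha n).2 _ ⟨x, rfl⟩).bddAbove
    exact ⟨c + 1, fun m hm hcm => by_contra fun hx => by have := hc ⟨hm, hx⟩; omega⟩
  let stage : α → ℕ → ℕ := fun x n => Nat.find (hev n x)
  have hstage : Measurable stage := measurable_pi_lambda _ fun n =>
    measurable_find (hev n) fun K => by
      simp only [ofPred_forall]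
      exact MeasurableSet.iInter fun m => MeasurableSet.iInter fun _ =>
        MeasurableSet.iInter fun _ => hUmeas n m
  obtain ⟨b, hb⟩ := hB stage hstage
  choose c hca hbc using fun n => (ha n).1.exists_gt (b n)
  refine ⟨fun n => U n (c n), fun n => hUmem n (c n), countable_range _,
    by rintro _ ⟨n, rfl⟩; exact hUmeas n (c n), isGammaCover_range (fun n hn => ?_) fun x => ?_⟩
  · exact (h𝒰 n).2.2.1.1.2 (hn ▸ hUmem n (c n))
  · exact (hb x).subset fun n hn hle =>
      hn (Nat.find_spec (hev n x) (c n) (hca n) (hle.trans (hbc n).le))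

end Converse

/-- `X` satisfies S₁(B_T,B_Γ) iff no Borel image of `X` in `[ℕ]^∞` is a tower
and every Borel image of `X` in `ℕ^ℕ` is bounded with respect to `≤*`. -/
theorem statement9 (X : Set ℝ) (hX : X.Infinite) :
    S1 (BorelTau ↥X) (BorelGamma ↥X) ↔
      ((∀ f : ↥X → Set ℕ, BorelMeasSets f → (∀ x, (f x).Infinite) →
          ¬ IsTower (Set.range f)) ∧
       (∀ g : ↥X → (ℕ → ℕ), Measurable g →
          ∃ b : ℕ → ℕ, ∀ x, {n | ¬ g x n ≤ b n}.Finite)) := by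
  have : Infinite X := hX.to_subtype
  refine ⟨fun hS1 => ⟨fun f hf hinf hT => ?_, fun g hg => exists_bound_of_S1 hS1 hg⟩,
    fun ⟨hA, hB⟩ => S1_of_noTower_of_bounded hA hB⟩
  exact hT.2.2 (exists_pseudoIntersection_of_S1 hS1 hf hinf hT.2.1)

end TauCoverPaper
end
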